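/- Let m ≥ 3 and n ≥ 1 be integers with 2^n < m − 4, and let a₁,…,aₙ be positive integers. Then the sum f(x₁,…,xₙ) = ∑_{j=1}^n a_j P_m(x_j) is not universal; more precisely, there exists a positive integer k ≤ m − 4 which is not represented by f. (At most 2^n integers less than m − 3 are represented by f.) -/
import Mathlib


/-- The generalized `m`-gonal number `P_m(x) = ((m-2)x² - (m-4)x)/2. -/
def polygonal (m x : ℤ) : ℤ := ((m - 2) * x ^ 2 - (m - 4) * x) / 2

/-- `Represents m a k` means the sum `∑ j, a j * P_m(x j)` represents the integer `k`. -/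
def Represents {n : ℕ} (m : ℤ) (a : Fin n → ℤ) (k : ℤ) : Prop :=
  ∃ x : Fin n → ℤ, ∑ j, a j * polygonal m (x j) = k

lemma two_mul_polygonal (m x : ℤ) :
    2 * polygonal m x = (m - 2) * x ^ 2 - (m - 4) * x := by
  have hev : Even ((x - 1) * ((x - 1) + 1)) := Int.even_mul_succ_self _
  obtain ⟨c, hc⟩ := hev
  have hdvd : (2 : ℤ) ∣ (m - 2) * x ^ 2 - (m - 4) * x := by
    exact ⟨(m - 2) * c + x, by linear_combination (m - 2) * hc⟩
  exact Int.mul_ediv_cancel' hdvd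

lemma polygonal_nonneg (m x : ℤ) (hm : 4 ≤ m) : 0 ≤ polygonal m x := by
  have h2 := two_mul_polygonal m x
  have hx : 0 ≤ x * (x - 1) := by
    rcases le_or_gt x 0 with h | h
    · nlinarith
    · nlinarith
  nlinarith

lemma polygonal_ge (m x : ℤ) (hm : 4 ≤ m) (h0 : x ≠ 0) (h1 : x ≠ 1) :
    m - 3 ≤ polygonal m x := by
  have h2 := two_mul_polygonal m x
  rcases lt_or_lt_iff_ne.mpr h0 with h | h
  · have hx : x ≤ -1 := by omega
    nlinarith [sq_nonneg (x + 1)]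
  · have hx : 2 ≤ x := by omega
    nlinarith [mul_nonneg (sub_nonneg.mpr hx) (by omega : (0:ℤ) ≤ x)]

lemma polygonal_zero (m : ℤ) : polygonal m 0 = 0 := by simp [polygonal]

lemma polygonal_one (m : ℤ) : polygonal m 1 = 1 := by
  have h2 := two_mul_polygonal m 1
  omega

/-- If 2^n < m − 4, then an n-ary sum of generalized m-gonal numbers is not universal:
some positive integer k ≤ m − 4 is not represented. -/
theorem not_universal_of_small_rank (m : ℤ) (hm : 3 ≤ m) (n : ℕ) (hn : 1 ≤ n)
    (hsmall : (2 : ℤ) ^ n < m - 4) (a : Fin n → ℤ) (ha : ∀ j, 0 < a j) :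
    ∃ k : ℤ, 1 ≤ k ∧ k ≤ m - 4 ∧ ¬ Represents m a k := by
  have hm4 : 4 ≤ m := by
    have : (0 : ℤ) < 2 ^ n := by positivity
    omega
  set g : Finset (Fin n) → ℤ := fun S => ∑ j ∈ S, a j with hg
  set img : Finset ℤ := (Finset.univ : Finset (Finset (Fin n))).image g with himg
  have hcard : img.card ≤ 2 ^ n := by
    calc img.card ≤ (Finset.univ : Finset (Finset (Fin n))).card := Finset.card_image_le
    _ = 2 ^ n := by simp
  have hIcard : (Finset.Icc (1 : ℤ) (m - 4)).card = (m - 4).toNat := by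
    rw [Int.card_Icc]; congr 1; omega
  have hlt : img.card < (Finset.Icc (1 : ℤ) (m - 4)).card := by
    rw [hIcard]
    have h2n : (2 : ℤ) ^ n = ((2 ^ n : ℕ) : ℤ) := by push_cast; ring
    omega
  by_contra hcon
  push_neg at hcon
  have hsub : Finset.Icc (1 : ℤ) (m - 4) ⊆ img := by
    intro k hkI
    rw [Finset.mem_Icc] at hkI
    obtain ⟨x, hx⟩ := hcon k hkI.1 hkI.2
    have hterm_nonneg : ∀ j, 0 ≤ a j * polygonal m (x j) := fun j =>
      mul_nonneg (ha j).le (polygonal_nonneg m (x j) hm4)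
    have hx01 : ∀ j, x j = 0 ∨ x j = 1 := by
      intro j
      by_contra h
      push_neg at h
      have hge : m - 3 ≤ polygonal m (x j) := polygonal_ge m (x j) hm4 h.1 h.2
      have h1 : m - 3 ≤ a j * polygonal m (x j) := by
        have := ha j
        nlinarith
      have h2 : a j * polygonal m (x j) ≤ k := by
        rw [← hx]
        exact Finset.single_le_sum (fun i _ => hterm_nonneg i) (Finset.mem_univ j)
      omega
    rw [Finset.mem_image]
    refine ⟨Finset.univ.filter (fun j => x j = 1), Finset.mem_univ _, ?_⟩
    rw [hg]
    simp only
    rw [Finset.sum_filter, ← hx]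
    apply Finset.sum_congr rfl
    intro j _
    rcases hx01 j with h | h <;> simp [h, polygonal_zero, polygonal_one]
  exact absurd (Finset.card_le_card hsub) (not_le.mpr hlt)
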